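/- Let ρ, a_max, b_min, b_max > 0 with b_min ≤ b_max, and suppose v_r ≥ 0, v_f ≥ 0, v_r ≤ v_f. Then along the dynamics where the rear car brakes at rate b ∈ [0, b_min] (v_r' = −b while v_r > 0) and the front car moves at constant speed v_f, the RSS margin y_f − y_r − dRSS(v_f, v_r) is nondecreasing, where dRSS(v_f, v_r) = max(0, v_r·ρ + a_max·ρ²/2 + (v_r + a_max·ρ)²/(2·b_min) − v_f²/(2·b_max)). -/

import Mathlib

/-! The gap `y_f − y_r` has derivative `v_f − v_r ≥ 0`, and `v_r` has derivative `−b ≤ 0`;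
since `dRSS` is monotone in the rear speed on `[0, ∞)`, the margin is a nondecreasing function
minus a nonincreasing one. -/

/-- The RSS minimum safety distance. -/
noncomputable def dRSS (ρ amax bmin bmax vf vr : ℝ) : ℝ :=
  max 0 (vr * ρ + amax * ρ ^ 2 / 2 + (vr + amax * ρ) ^ 2 / (2 * bmin)
    - vf ^ 2 / (2 * bmax))

open Set

lemma monotoneOn_of_hasDerivAt_nonneg {D : Set ℝ} (hD : Convex ℝ D) {f f' : ℝ → ℝ}
    (hf : ∀ x ∈ D, HasDerivAt f (f' x) x) (hf'₀ : ∀ x ∈ D, 0 ≤ f' x) : MonotoneOn f D :=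
  monotoneOn_of_hasDerivWithinAt_nonneg hD
    (fun x hx => (hf x hx).continuousAt.continuousWithinAt)
    (fun x hx => (hf x (interior_subset hx)).hasDerivWithinAt)
    (fun x hx => hf'₀ x (interior_subset hx))

lemma antitoneOn_of_hasDerivAt_nonpos {D : Set ℝ} (hD : Convex ℝ D) {f f' : ℝ → ℝ}
    (hf : ∀ x ∈ D, HasDerivAt f (f' x) x) (hf'₀ : ∀ x ∈ D, f' x ≤ 0) : AntitoneOn f D :=
  antitoneOn_of_hasDerivWithinAt_nonpos hD
    (fun x hx => (hf x hx).continuousAt.continuousWithinAt)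
    (fun x hx => (hf x (interior_subset hx)).hasDerivWithinAt)
    (fun x hx => hf'₀ x (interior_subset hx))

lemma dRSS_monotoneOn {ρ amax bmin : ℝ} (hρ : 0 ≤ ρ) (ha : 0 ≤ amax) (hb : 0 ≤ bmin)
    (bmax vf : ℝ) : MonotoneOn (dRSS ρ amax bmin bmax vf) (Ici 0) := by
  intro v₁ (hv₁ : 0 ≤ v₁) v₂ _ hv
  have hlin : v₁ * ρ ≤ v₂ * ρ := mul_le_mul_of_nonneg_right hv hρ
  have hsq : (v₁ + amax * ρ) ^ 2 / (2 * bmin) ≤ (v₂ + amax * ρ) ^ 2 / (2 * bmin) := by gcongr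
  unfold dRSS
  gcongr max 0 ?_
  linarith

theorem stmt12_general (ρ amax bmin bmax vf b : ℝ)
    (hρ : 0 < ρ) (ha : 0 < amax) (hb1 : 0 < bmin)
    (hb0 : 0 ≤ b)
    (yf yr vr : ℝ → ℝ) (a c : ℝ)
    (hyf : ∀ t ∈ Set.Icc a c, HasDerivAt yf vf t)
    (hyr : ∀ t ∈ Set.Icc a c, HasDerivAt yr (vr t) t)
    (hvr : ∀ t ∈ Set.Icc a c, HasDerivAt vr (-b) t)
    (hpos : ∀ t ∈ Set.Icc a c, 0 ≤ vr t)
    (hvle : ∀ t ∈ Set.Icc a c, vr t ≤ vf) :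
    MonotoneOn (fun t => yf t - yr t - dRSS ρ amax bmin bmax vf (vr t))
      (Set.Icc a c) := by
  have hgap : MonotoneOn (fun t => yf t - yr t) (Icc a c) :=
    monotoneOn_of_hasDerivAt_nonneg (convex_Icc a c) (fun t ht => (hyf t ht).sub (hyr t ht))
      (fun t ht => sub_nonneg.2 (hvle t ht))
  have hspeed : AntitoneOn vr (Icc a c) :=
    antitoneOn_of_hasDerivAt_nonpos (convex_Icc a c) hvr (fun _ _ => neg_nonpos.2 hb0)
  have hdist : AntitoneOn (dRSS ρ amax bmin bmax vf ∘ vr) (Icc a c) :=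
    (dRSS_monotoneOn hρ.le ha.le hb1.le bmax vf).comp_AntitoneOn hspeed hpos
  exact fun s hs t ht hst => sub_le_sub (hgap hs ht hst) (hdist hs ht hst)

/-- Safety preservation in subscenario T₁₁: if the rear car (speed `v_r ∈ [0, v_f]`)
brakes at a rate `b ∈ [0, bmin]` while the front car moves at constant speed `v_f`,
then the RSS margin `y_f − y_r − dRSS(v_f, v_r)` is nondecreasing. -/
theorem stmt12 (ρ amax bmin bmax vf b : ℝ)
    (hρ : 0 < ρ) (ha : 0 < amax) (hb1 : 0 < bmin) (hb2 : 0 < bmax)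
    (hle : bmin ≤ bmax) (hvf : 0 ≤ vf) (hb0 : 0 ≤ b) (hbb : b ≤ bmin)
    (yf yr vr : ℝ → ℝ) (a c : ℝ) (hac : a ≤ c)
    (hyf : ∀ t ∈ Set.Icc a c, HasDerivAt yf vf t)
    (hyr : ∀ t ∈ Set.Icc a c, HasDerivAt yr (vr t) t)
    (hvr : ∀ t ∈ Set.Icc a c, HasDerivAt vr (-b) t)
    (hpos : ∀ t ∈ Set.Icc a c, 0 ≤ vr t)
    (hvle : ∀ t ∈ Set.Icc a c, vr t ≤ vf) :
    MonotoneOn (fun t => yf t - yr t - dRSS ρ amax bmin bmax vf (vr t))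
      (Set.Icc a c) :=
  stmt12_general ρ amax bmin bmax vf b hρ ha hb1 hb0 yf yr vr a c hyf hyr hvr hpos hvle
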